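/- arXiv:1708.08302 — 3 statements merged into one kernel-verified Lean document; each statement's English description precedes it below -/
import Mathlib

section
/- Let (T,A,μ) be a measure space and x, y measurable functions T → ℝ∪{±∞} with ∫_T x dμ < ∞ and ∫_T y dμ < ∞ (extended integrals). Then ∫_T (x + y) dμ = ∫_T x dμ + ∫_T y dμ, where sums of extended reals use the convention (-∞) + ∞ = ∞ + (-∞) := ∞. -/
open MeasureTheory ENNReal Filter Set Topology

/-- Positive part of an extended real, in `ℝ≥0∞`. -/
noncomputable def epos (a : EReal) : ℝ≥0∞ := if a = ⊤ then ⊤ else ENNReal.ofReal a.toReal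

/-- Extended integral `∫ f dμ := ∫ f₊ dμ - ∫ f₋ dμ` with the convention `∞ - ∞ := ∞`. -/
noncomputable def eintegral {T : Type*} [MeasurableSpace T] (μ : Measure T) (f : T → EReal) :
    EReal :=
  if (∫⁻ t, epos (f t) ∂μ) = ⊤ then ⊤
  else ((∫⁻ t, epos (f t) ∂μ : ℝ≥0∞) : EReal) - ((∫⁻ t, epos (- f t) ∂μ : ℝ≥0∞) : EReal)

/-- Addition of extended reals with the convention `(-∞) + ∞ = ∞ + (-∞) := ∞`. -/
noncomputable def eadd (a b : EReal) : EReal :=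
  if (a = ⊥ ∧ b = ⊤) ∨ (a = ⊤ ∧ b = ⊥) then ⊤ else a + b

/-- Subtraction of extended reals with the convention `∞ - ∞ := ∞`. -/
noncomputable def esub (a b : EReal) : EReal := eadd a (-b)

/-! Finiteness of `∫ x₊` and `∫ y₊` forces `x, y < ∞` almost everywhere, so almost everywhere the
convention sum `eadd` is the ordinary sum in `EReal`. For all extended reals `a, b` one has
`(a + b)₊ + a₋ + b₋ = (a + b)₋ + a₊ + b₊` in `[0, ∞]`, even with `EReal`'s `⊥ + ⊤ = ⊥`;
integrating gives the same identity between the positive and negative parts of the integrals.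
Since `∫ (x + y)₊ ≤ ∫ x₊ + ∫ y₊ < ∞`, it can be rearranged into the claimed equation: an infinite
negative part on the right forces one on the left, and otherwise everything is real. -/

lemma epos_eq_toENNReal : epos = EReal.toENNReal := rfl

lemma eadd_eq_add {a b : EReal} (ha : a ≠ ⊤) (hb : b ≠ ⊤) : eadd a b = a + b := by
  simp [eadd, ha, hb]

namespace EReal

lemma toENNReal_add_add_neg_eq (a b : EReal) :
    (a + b).toENNReal + (-a).toENNReal + (-b).toENNReal =
      (-(a + b)).toENNReal + a.toENNReal + b.toENNReal := by
  induction a <;> induction b <;> try simp_all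
  rename_i r s
  simp only [← coe_add, toReal_coe, real_coe_toENNReal, ENNReal.ofReal, ← ENNReal.coe_add,
    ENNReal.coe_inj]
  ext
  simp only [NNReal.coe_add, Real.coe_toNNReal']
  grind

lemma coe_ennreal_sub_ne_top {p : ℝ≥0∞} (hp : p ≠ ⊤) (n : ℝ≥0∞) : (p : EReal) - n ≠ ⊤ := by
  lift p to NNReal using hp
  induction n <;> simp [coe_nnreal_eq_coe_real, ← coe_sub]

lemma coe_ennreal_sub_eq_add {pz nz px nx py ny : ℝ≥0∞} (hpz : pz ≠ ⊤) (hpx : px ≠ ⊤)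
    (hpy : py ≠ ⊤) (h : pz + nx + ny = nz + px + py) :
    (pz : EReal) - nz = (px - nx) + (py - ny) := by
  lift pz to NNReal using hpz
  lift px to NNReal using hpx
  lift py to NNReal using hpy
  by_cases hnx : nx = ⊤
  · have hnz : nz = ⊤ := by simpa [hnx, eq_comm] using h
    simp [hnx, hnz]
  by_cases hny : ny = ⊤
  · have hnz : nz = ⊤ := by simpa [hny, eq_comm] using h
    simp [hny, hnz]
  have hnz : nz ≠ ⊤ := by
    rintro rfl
    simp [hnx, hny] at h
  lift nx to NNReal using hnx
  lift ny to NNReal using hny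
  lift nz to NNReal using hnz
  have h' : (pz : ℝ) + nx + ny = nz + px + py := by exact_mod_cast h
  simp only [coe_nnreal_eq_coe_real, ← coe_sub, ← coe_add, EReal.coe_eq_coe_iff]
  linarith

end EReal

section

variable {T : Type*} [MeasurableSpace T] {μ : Measure T} {f g : T → EReal}

lemma eintegral_of_lintegral_ne_top (hf : ∫⁻ t, (f t).toENNReal ∂μ ≠ ⊤) :
    eintegral μ f = (∫⁻ t, (f t).toENNReal ∂μ : EReal) - ∫⁻ t, (-f t).toENNReal ∂μ :=
  if_neg hf

lemma lintegral_toENNReal_ne_top_of_eintegral_lt_top (hf : eintegral μ f < ⊤) :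
    ∫⁻ t, (f t).toENNReal ∂μ ≠ ⊤ := by
  intro h
  simp [eintegral, epos_eq_toENNReal, h] at hf

lemma eintegral_congr_ae (h : f =ᵐ[μ] g) : eintegral μ f = eintegral μ g := by
  have hpos : ∫⁻ t, epos (f t) ∂μ = ∫⁻ t, epos (g t) ∂μ := lintegral_congr_ae (h.fun_comp epos)
  have hneg : ∫⁻ t, epos (-f t) ∂μ = ∫⁻ t, epos (-g t) ∂μ :=
    lintegral_congr_ae (h.neg.fun_comp epos)
  simp only [eintegral, hpos, hneg]

lemma ae_ne_top_of_lintegral_toENNReal_ne_top (hf : Measurable f)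
    (hfin : ∫⁻ t, (f t).toENNReal ∂μ ≠ ⊤) : ∀ᵐ t ∂μ, f t ≠ ⊤ := by
  filter_upwards [ae_lt_top hf.ereal_toENNReal hfin] with t ht
  exact EReal.toENNReal_ne_top_iff.mp ht.ne

lemma lintegral_toENNReal_add_le (hf : Measurable f) :
    ∫⁻ t, (f t + g t).toENNReal ∂μ ≤ ∫⁻ t, (f t).toENNReal ∂μ + ∫⁻ t, (g t).toENNReal ∂μ := by
  rw [← lintegral_add_left hf.ereal_toENNReal]
  exact lintegral_mono fun t => EReal.toENNReal_add_le

lemma lintegral_toENNReal_add_add_neg_eq (hf : Measurable f) (hg : Measurable g) :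
    ∫⁻ t, (f t + g t).toENNReal ∂μ + ∫⁻ t, (-f t).toENNReal ∂μ + ∫⁻ t, (-g t).toENNReal ∂μ =
      ∫⁻ t, (-(f t + g t)).toENNReal ∂μ + ∫⁻ t, (f t).toENNReal ∂μ +
        ∫⁻ t, (g t).toENNReal ∂μ := by
  have hf_pos : Measurable fun t => (f t).toENNReal := hf.ereal_toENNReal
  have hg_pos : Measurable fun t => (g t).toENNReal := hg.ereal_toENNReal
  have hf_neg : Measurable fun t => (-f t).toENNReal := hf.neg.ereal_toENNReal
  have hg_neg : Measurable fun t => (-g t).toENNReal := hg.neg.ereal_toENNReal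
  rw [← lintegral_add_right _ hf_neg, ← lintegral_add_right _ hg_neg,
    ← lintegral_add_right _ hf_pos, ← lintegral_add_right _ hg_pos]
  exact lintegral_congr fun t => EReal.toENNReal_add_add_neg_eq (f t) (g t)

end

/-- Lemma 1(c): if both extended integrals are < infinity, the extended integral of the sum is
the sum (with the convention (-inf) + inf := inf). -/
theorem stmt_2 {T : Type*} [MeasurableSpace T] (μ : Measure T) (x y : T → EReal)
    (hx : Measurable x) (hy : Measurable y)
    (hxf : eintegral μ x < ⊤) (hyf : eintegral μ y < ⊤) :
    eintegral μ (fun t => eadd (x t) (y t)) = eadd (eintegral μ x) (eintegral μ y) := by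
  have hPx := lintegral_toENNReal_ne_top_of_eintegral_lt_top hxf
  have hPy := lintegral_toENNReal_ne_top_of_eintegral_lt_top hyf
  have hsum : (fun t => eadd (x t) (y t)) =ᵐ[μ] fun t => x t + y t := by
    filter_upwards [ae_ne_top_of_lintegral_toENNReal_ne_top hx hPx,
      ae_ne_top_of_lintegral_toENNReal_ne_top hy hPy] with t hxt hyt using eadd_eq_add hxt hyt
  have hPxy : ∫⁻ t, (x t + y t).toENNReal ∂μ ≠ ⊤ :=
    ne_top_of_le_ne_top (add_ne_top.mpr ⟨hPx, hPy⟩) (lintegral_toENNReal_add_le hx)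
  rw [eintegral_congr_ae hsum, eintegral_of_lintegral_ne_top hPxy,
    eintegral_of_lintegral_ne_top hPx, eintegral_of_lintegral_ne_top hPy,
    eadd_eq_add (EReal.coe_ennreal_sub_ne_top hPx _) (EReal.coe_ennreal_sub_ne_top hPy _)]
  exact EReal.coe_ennreal_sub_eq_add hPxy hPx hPy
    (lintegral_toENNReal_add_add_neg_eq hx hy)
end

section
/- Under the hypotheses of the directional derivative formula, if x̄ is in the effective domain of Φ with Φ(x̄) ∈ ℝ and x is in the effective domain with Φ(x) = -∞, then Φ'(x̄; x - x̄) = -∞ and the extended integral ∫_T φ'(x̄(t))·(x(t) - x̄(t)) dμ(t) = -∞. -/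
/-!
Convexity gives `φ (x̄ + s (x - x̄)) ≤ (1 - s) φ x̄ + s φ x` pointwise, and, passing to the limit
in the difference quotients, `φ'(x̄) (x - x̄) ≤ φ x - φ x̄` wherever both values are finite. In
both cases the integrand is bounded by `h + f` with `∫ f = -∞` and `h⁺` integrable, and such a
bound forces the integral to be `-∞`. So `Φ` is `-∞` on the segment `(x̄, x]`, and every
difference quotient of `Φ` at `x̄` in the direction `x - x̄` is `-∞`.
-/

open MeasureTheory ENNReal Filter Set Topology

/-- The integral functional Phi(x) := extended integral of phi(x(.)) with respect to mu. -/
noncomputable def Phi {T : Type*} [MeasurableSpace T] (μ : Measure T) (φ : ℝ → EReal)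
    (x : T → ℝ) : EReal := eintegral μ (fun t => φ (x t))

lemma measurable_epos : Measurable epos :=
  Measurable.ite (measurableSet_singleton ⊤) measurable_const
    (ENNReal.measurable_ofReal.comp measurable_ereal_toReal)

@[simp] lemma epos_coe (r : ℝ) : epos r = ENNReal.ofReal r := by simp [epos]

@[simp] lemma epos_top : epos ⊤ = ⊤ := by simp [epos]

@[simp] lemma epos_bot : epos ⊥ = 0 := by simp [epos]

lemma epos_eq_top_iff {a : EReal} : epos a = ⊤ ↔ a = ⊤ := by
  unfold epos; split_ifs with h <;> simp [h]

lemma epos_mono : Monotone epos := by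
  intro a b h
  induction a <;> induction b <;> simp_all [ENNReal.ofReal_le_ofReal]

lemma epos_add_le (a b : EReal) : epos (a + b) ≤ epos a + epos b := by
  induction a <;> induction b <;> simp [← EReal.coe_add, ENNReal.ofReal_add_le]

lemma epos_coe_mul {c : ℝ} (hc : 0 ≤ c) (a : EReal) :
    epos (c * a) = ENNReal.ofReal c * epos a := by
  rcases hc.eq_or_lt with rfl | hc
  · simp [epos]
  induction a <;>
    simp [EReal.coe_mul_top_of_pos hc, EReal.coe_mul_bot_of_pos hc, ← EReal.coe_mul,
      ENNReal.ofReal_mul hc.le, ENNReal.mul_top, hc]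

lemma epos_neg_le_of_le_add {a b c : EReal} (h : a ≤ b + c) :
    epos (-c) ≤ epos (-a) + epos b := by
  induction a <;> induction b <;> induction c <;> simp_all [← EReal.coe_add, ← EReal.coe_neg]
  case coe.coe.coe a b c =>
    calc ENNReal.ofReal (-c) ≤ ENNReal.ofReal (-a + b) := ENNReal.ofReal_le_ofReal (by linarith)
      _ ≤ _ := ENNReal.ofReal_add_le

section eintegral

variable {T : Type*} [MeasurableSpace T] {μ : Measure T} {f g h : T → EReal}

lemma lintegral_epos_ne_top_of_eintegral_ne_top (hf : eintegral μ f ≠ ⊤) :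
    ∫⁻ t, epos (f t) ∂μ ≠ ⊤ := by
  contrapose! hf
  simp [eintegral, hf]

lemma eintegral_eq_bot_iff :
    eintegral μ f = ⊥ ↔ ∫⁻ t, epos (f t) ∂μ ≠ ⊤ ∧ ∫⁻ t, epos (-f t) ∂μ = ⊤ := by
  unfold eintegral
  split_ifs with hpos
  · simp [hpos]
  · simp [hpos, sub_eq_add_neg, EReal.add_eq_bot_iff]

lemma lintegral_epos_neg_ne_top_of_eintegral_eq_coe {r : ℝ} (hf : eintegral μ f = r) :
    ∫⁻ t, epos (-f t) ∂μ ≠ ⊤ := by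
  have hpos := lintegral_epos_ne_top_of_eintegral_ne_top (hf ▸ EReal.coe_ne_top r)
  intro hneg
  exact EReal.coe_ne_bot r (hf ▸ eintegral_eq_bot_iff.2 ⟨hpos, hneg⟩)

lemma ae_ne_top_of_lintegral_epos_ne_top (hf : Measurable f) (hfin : ∫⁻ t, epos (f t) ∂μ ≠ ⊤) :
    ∀ᵐ t ∂μ, f t ≠ ⊤ := by
  filter_upwards [ae_lt_top (measurable_epos.comp hf) hfin] with t ht
  exact epos_eq_top_iff.not.1 ht.ne

lemma eintegral_coe_mul_eq_bot {c : ℝ} (hc : 0 < c) (hf : eintegral μ f = ⊥) :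
    eintegral μ (fun t => c * f t) = ⊥ := by
  obtain ⟨hpos, hneg⟩ := eintegral_eq_bot_iff.1 hf
  have hneg_mul (a : EReal) : -((c : EReal) * a) = c * -a := by
    rw [mul_comm, ← EReal.neg_mul, mul_comm]
  simp only [eintegral_eq_bot_iff, hneg_mul, epos_coe_mul hc.le,
    lintegral_const_mul' _ _ ENNReal.ofReal_ne_top]
  exact ⟨ENNReal.mul_ne_top ENNReal.ofReal_ne_top hpos,
    hneg ▸ ENNReal.mul_top (ENNReal.ofReal_pos.2 hc).ne'⟩

lemma eintegral_eq_bot_of_ae_le_add (hh : Measurable h) (hh_fin : ∫⁻ t, epos (h t) ∂μ ≠ ⊤)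
    (hle : ∀ᵐ t ∂μ, g t ≤ h t + f t) (hf : eintegral μ f = ⊥) : eintegral μ g = ⊥ := by
  obtain ⟨hf_pos, hf_neg⟩ := eintegral_eq_bot_iff.1 hf
  have hmh : Measurable fun t => epos (h t) := measurable_epos.comp hh
  refine eintegral_eq_bot_iff.2 ⟨ne_top_of_le_ne_top (ENNReal.add_ne_top.2 ⟨hh_fin, hf_pos⟩) ?_, ?_⟩
  · calc ∫⁻ t, epos (g t) ∂μ ≤ ∫⁻ t, epos (h t) + epos (f t) ∂μ :=
          lintegral_mono_ae (hle.mono fun t ht => (epos_mono ht).trans (epos_add_le _ _))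
      _ = _ := lintegral_add_left hmh _
  · have : ∫⁻ t, epos (-f t) ∂μ ≤ ∫⁻ t, epos (-g t) ∂μ + ∫⁻ t, epos (h t) ∂μ :=
      calc ∫⁻ t, epos (-f t) ∂μ ≤ ∫⁻ t, epos (-g t) + epos (h t) ∂μ :=
            lintegral_mono_ae (hle.mono fun t ht => epos_neg_le_of_le_add ht)
        _ = _ := lintegral_add_right _ hmh
    rw [hf_neg, top_le_iff, ENNReal.add_eq_top] at this
    exact this.resolve_right hh_fin

end eintegral

section convex

variable {φ : ℝ → EReal}

lemma apply_add_mul_sub_le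
    (hconv : ∀ u v a b : ℝ, 0 ≤ a → 0 ≤ b → a + b = 1 →
      φ (a * u + b * v) ≤ (a : EReal) * φ u + (b : EReal) * φ v)
    {s : ℝ} (hs0 : 0 ≤ s) (hs1 : s ≤ 1) (u v : ℝ) :
    φ (u + s * (v - u)) ≤ ((1 - s : ℝ) : EReal) * φ u + (s : EReal) * φ v := by
  rw [show u + s * (v - u) = (1 - s) * u + s * v by ring]
  exact hconv u v (1 - s) s (by linarith) hs0 (by ring)

lemma le_sub_of_tendsto_slope (hbot : ∀ u, φ u ≠ ⊥)
    (hconv : ∀ u v a b : ℝ, 0 ≤ a → 0 ≤ b → a + b = 1 →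
      φ (a * u + b * v) ≤ (a : EReal) * φ u + (b : EReal) * φ v)
    {u v : ℝ} (hu : φ u ≠ ⊤) (hv : φ v ≠ ⊤) {d : EReal}
    (hd : Tendsto (fun s : ℝ => ((((φ (u + s * (v - u))).toReal - (φ u).toReal) / s : ℝ) : EReal))
      (𝓝[>] 0) (𝓝 d)) :
    d ≤ φ v - φ u := by
  obtain ⟨a, ha⟩ : ∃ a : ℝ, φ u = a := ⟨_, (EReal.coe_toReal hu (hbot u)).symm⟩
  obtain ⟨b, hb⟩ : ∃ b : ℝ, φ v = b := ⟨_, (EReal.coe_toReal hv (hbot v)).symm⟩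
  rw [ha, EReal.toReal_coe] at hd
  rw [ha, hb, ← EReal.coe_sub]
  refine le_of_tendsto hd ?_
  filter_upwards [Ioo_mem_nhdsGT (zero_lt_one' ℝ)] with s ⟨hs0, hs1⟩
  have hy := apply_add_mul_sub_le hconv hs0.le hs1.le u v
  rw [ha, hb, ← EReal.coe_mul, ← EReal.coe_mul, ← EReal.coe_add] at hy
  have hy' : (φ (u + s * (v - u))).toReal ≤ (1 - s) * a + s * b := by
    simpa only [EReal.toReal_coe] using EReal.toReal_le_toReal hy (hbot _) (EReal.coe_ne_top _)
  rw [EReal.coe_le_coe_iff, div_le_iff₀ hs0]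
  nlinarith

lemma Phi_add_smul_sub_eq_bot {T : Type*} [MeasurableSpace T] {μ : Measure T}
    (hφ : Measurable φ)
    (hconv : ∀ u v a b : ℝ, 0 ≤ a → 0 ≤ b → a + b = 1 →
      φ (a * u + b * v) ≤ (a : EReal) * φ u + (b : EReal) * φ v)
    {xb x : T → ℝ} (hxb : Measurable xb) (hb : Phi μ φ xb ≠ ⊤) (hx : Phi μ φ x = ⊥)
    {s : ℝ} (hs0 : 0 < s) (hs1 : s ≤ 1) :
    Phi μ φ (xb + s • (x - xb)) = ⊥ := by
  refine eintegral_eq_bot_of_ae_le_add (h := fun t => ((1 - s : ℝ) : EReal) * φ (xb t))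
    (measurable_const.mul (hφ.comp hxb)) ?_
    (ae_of_all _ fun t => apply_add_mul_sub_le hconv hs0.le hs1 (xb t) (x t))
    (eintegral_coe_mul_eq_bot hs0 hx)
  simp only [epos_coe_mul (sub_nonneg.2 hs1), lintegral_const_mul' _ _ ENNReal.ofReal_ne_top]
  exact ENNReal.mul_ne_top ENNReal.ofReal_ne_top (lintegral_epos_ne_top_of_eintegral_ne_top hb)

end convex

theorem stmt_10_general {T : Type*} [MeasurableSpace T] (μ : Measure T) (φ : ℝ → EReal)
    (hbot : ∀ u, φ u ≠ ⊥) (hlsc : LowerSemicontinuous φ)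
    (hconv : ∀ u v a b : ℝ, 0 ≤ a → 0 ≤ b → a + b = 1 →
      φ (a * u + b * v) ≤ (a : EReal) * φ u + (b : EReal) * φ v)
    (dphi : ℝ → EReal)
    (hdphi : ∀ u v : ℝ, φ u ≠ ⊤ → φ v ≠ ⊤ →
      Tendsto (fun s : ℝ => ((((φ (u + s * (v - u))).toReal - (φ u).toReal) / s : ℝ) : EReal))
        (𝓝[>] (0 : ℝ)) (𝓝 (dphi u * ((v : EReal) - (u : EReal)))))
    (X : Subspace ℝ (T → ℝ)) (hX : ∀ x ∈ X, Measurable x)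
    (xb x : T → ℝ) (hxb : xb ∈ X) (hx : x ∈ X)
    (hPhib : ∃ r : ℝ, Phi μ φ xb = (r : EReal)) (hPhix : Phi μ φ x = ⊥) :
    Tendsto (fun s : ℝ => (Phi μ φ (xb + s • (x - xb)) - Phi μ φ xb) * ((s⁻¹ : ℝ) : EReal))
        (𝓝[>] (0 : ℝ)) (𝓝 ⊥) ∧
      eintegral μ (fun t => dphi (xb t) * ((x t : EReal) - (xb t : EReal))) = ⊥ := by
  obtain ⟨r, hr⟩ := hPhib
  have hφ : Measurable φ := hlsc.measurable
  have hmxb : Measurable xb := hX xb hxb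
  have hmx : Measurable x := hX x hx
  have hb : Phi μ φ xb ≠ ⊤ := hr ▸ EReal.coe_ne_top r
  refine ⟨tendsto_const_nhds.congr' ?_, ?_⟩
  · filter_upwards [Ioc_mem_nhdsGT (zero_lt_one' ℝ)] with s ⟨hs0, hs1⟩
    rw [Phi_add_smul_sub_eq_bot hφ hconv hmxb hb hPhix hs0 hs1, hr,
      EReal.bot_sub, EReal.bot_mul_coe_of_pos (inv_pos.2 hs0)]
  · have hxb_fin : ∀ᵐ t ∂μ, φ (xb t) ≠ ⊤ := ae_ne_top_of_lintegral_epos_ne_top (hφ.comp hmxb)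
      (lintegral_epos_ne_top_of_eintegral_ne_top hb)
    have hx_fin : ∀ᵐ t ∂μ, φ (x t) ≠ ⊤ := ae_ne_top_of_lintegral_epos_ne_top (hφ.comp hmx)
      (eintegral_eq_bot_iff.1 hPhix).1
    refine eintegral_eq_bot_of_ae_le_add (h := fun t => -φ (xb t)) (hφ.comp hmxb).neg
      (lintegral_epos_neg_ne_top_of_eintegral_eq_coe hr) ?_ hPhix
    filter_upwards [hxb_fin, hx_fin] with t hu hv
    rw [add_comm, ← sub_eq_add_neg]
    exact le_sub_of_tendsto_slope hbot hconv hu hv (hdphi _ _ hu hv)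

/-- If `Φ(x̄) ∈ ℝ` and `Φ(x) = -∞` (with `x` in the effective domain of `Φ`), then
`Φ'(x̄; x - x̄) = -∞` and the extended integral of `φ'(x̄(t))·(x(t) - x̄(t))` equals `-∞`. -/
theorem stmt_10 {T : Type*} [MeasurableSpace T] (μ : Measure T) (φ : ℝ → EReal)
    (hbot : ∀ u, φ u ≠ ⊥) (hproper : ∃ u, φ u ≠ ⊤) (hlsc : LowerSemicontinuous φ)
    (hconv : ∀ u v a b : ℝ, 0 ≤ a → 0 ≤ b → a + b = 1 →
      φ (a * u + b * v) ≤ (a : EReal) * φ u + (b : EReal) * φ v)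
    (hstrict : ∀ u v : ℝ, φ u ≠ ⊤ → φ v ≠ ⊤ → u ≠ v → ∀ a b : ℝ, 0 < a → 0 < b → a + b = 1 →
      φ (a * u + b * v) < (a : EReal) * φ u + (b : EReal) * φ v)
    (hint : (interior {u : ℝ | φ u ≠ ⊤}).Nonempty)
    (dphi : ℝ → EReal)
    (hdphi : ∀ u v : ℝ, φ u ≠ ⊤ → φ v ≠ ⊤ →
      Tendsto (fun s : ℝ => ((((φ (u + s * (v - u))).toReal - (φ u).toReal) / s : ℝ) : EReal))
        (𝓝[>] (0 : ℝ)) (𝓝 (dphi u * ((v : EReal) - (u : EReal)))))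
    (X : Subspace ℝ (T → ℝ)) (hX : ∀ x ∈ X, Measurable x)
    (xb x : T → ℝ) (hxb : xb ∈ X) (hx : x ∈ X)
    (hPhib : ∃ r : ℝ, Phi μ φ xb = (r : EReal)) (hPhix : Phi μ φ x = ⊥) :
    Tendsto (fun s : ℝ => (Phi μ φ (xb + s • (x - xb)) - Phi μ φ xb) * ((s⁻¹ : ℝ) : EReal))
        (𝓝[>] (0 : ℝ)) (𝓝 ⊥) ∧
      eintegral μ (fun t => dphi (xb t) * ((x t : EReal) - (xb t : EReal))) = ⊥ :=
  stmt_10_general μ φ hbot hlsc hconv dphi hdphi X hX xb x hxb hx hPhib hPhix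
end

section
/- Let μ be σ-finite and let Y be a linear space of measurable functions satisfying condition (H): for every A ∈ A with 0 < μ(A) < ∞ there exists a measurable u with u > 0 a.e. and u·χ_A ∈ Y. If ȳ is measurable (extended-real valued) and ∫_T ȳ·u dμ = 0 for every u ∈ Y, then ȳ = 0 almost everywhere. -/
open MeasureTheory ENNReal Filter Set Topology

section eintegral

variable {T : Type*} [MeasurableSpace T] {μ : Measure T} {f : T → EReal}

lemma eintegral_eq_zero_iff :
    eintegral μ f = 0 ↔
      ∫⁻ t, epos (f t) ∂μ ≠ ⊤ ∧ ∫⁻ t, epos (f t) ∂μ = ∫⁻ t, epos (-f t) ∂μ := by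
  unfold eintegral
  generalize ∫⁻ t, epos (f t) ∂μ = P
  generalize ∫⁻ t, epos (-f t) ∂μ = N
  rcases eq_or_ne P ⊤ with rfl | hP
  · simp
  lift P to NNReal using hP
  rcases eq_or_ne N ⊤ with rfl | hN
  · simp
  lift N to NNReal using hN
  simp [EReal.coe_nnreal_eq_coe_real, ← EReal.coe_sub, sub_eq_zero]

lemma eintegral_neg_eq_zero (h : eintegral μ f = 0) : eintegral μ (fun t => -f t) = 0 := by
  obtain ⟨hfin, heq⟩ := eintegral_eq_zero_iff.mp h
  refine eintegral_eq_zero_iff.mpr ⟨heq ▸ hfin, ?_⟩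
  simp only [neg_neg, heq]

lemma ae_eq_zero_of_eintegral_eq_zero_of_nonneg (hf : AEMeasurable f μ)
    (h : eintegral μ f = 0) (hnn : ∀ᵐ t ∂μ, 0 ≤ f t) : ∀ᵐ t ∂μ, f t = 0 := by
  have hneg : ∫⁻ t, epos (-f t) ∂μ = 0 := by
    refine (lintegral_congr_ae ?_).trans lintegral_zero
    filter_upwards [hnn] with t ht
    exact EReal.toENNReal_of_nonpos (by simpa using ht)
  have hpos : ∫⁻ t, epos (f t) ∂μ = 0 := (eintegral_eq_zero_iff.mp h).2.trans hneg
  rw [epos_eq_toENNReal, lintegral_eq_zero_iff' hf.ereal_toENNReal] at hpos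
  filter_upwards [hpos, hnn] with t ht h0
  exact le_antisymm (EReal.toENNReal_eq_zero_iff.mp ht) h0

end eintegral

lemma ae_nonpos_of_eintegral_mul_eq_zero {T : Type*} [MeasurableSpace T] (μ : Measure T)
    [SigmaFinite μ] (Y : Set (T → ℝ))
    (hH : ∀ A : Set T, MeasurableSet A → 0 < μ A → μ A < ⊤ →
      ∃ u : T → ℝ, Measurable u ∧ (∀ᵐ t ∂μ, 0 < u t) ∧ A.indicator u ∈ Y)
    {yb : T → EReal} (hyb : Measurable yb)
    (hzero : ∀ u ∈ Y, eintegral μ (fun t => yb t * ((u t : ℝ) : EReal)) = 0) :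
    ∀ᵐ t ∂μ, yb t ≤ 0 := by
  simp only [ae_iff, not_le]
  by_contra hA
  obtain ⟨B, hB, hBA, hBpos, hBfin⟩ :=
    Measure.exists_subset_measure_lt_top (measurableSet_lt measurable_const hyb)
      (pos_iff_ne_zero.mpr hA)
  obtain ⟨u, hu, hu_pos, huY⟩ := hH B hB hBpos hBfin
  set f : T → EReal := fun t => yb t * ((B.indicator u t : ℝ) : EReal)
  have hf_pos : ∀ᵐ t ∂μ, t ∈ B → 0 < f t := by
    filter_upwards [hu_pos] with t ht htB
    exact EReal.mul_pos (hBA htB) (by simpa [indicator_of_mem htB] using ht)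
  have hf_nonneg : ∀ᵐ t ∂μ, 0 ≤ f t := by
    filter_upwards [hf_pos] with t ht
    by_cases htB : t ∈ B
    · exact (ht htB).le
    · simp [f, indicator_of_notMem htB]
  have hf_zero := ae_eq_zero_of_eintegral_eq_zero_of_nonneg
    (hyb.mul (hu.indicator hB).coe_real_ereal).aemeasurable (hzero _ huY) hf_nonneg
  refine hBpos.ne' (measure_eq_zero_iff_ae_notMem.mpr ?_)
  filter_upwards [hf_pos, hf_zero] with t hpos hft htB
  exact (hpos htB).ne' hft

theorem stmt_17_general {T : Type*} [MeasurableSpace T] (μ : Measure T) [SigmaFinite μ]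
    (Y : Subspace ℝ (T → ℝ))
    (hH : ∀ A : Set T, MeasurableSet A → 0 < μ A → μ A < ⊤ →
      ∃ u : T → ℝ, Measurable u ∧ (∀ᵐ t ∂μ, 0 < u t) ∧ A.indicator u ∈ Y)
    (yb : T → EReal) (hyb : Measurable yb)
    (hzero : ∀ u ∈ Y, eintegral μ (fun t => yb t * ((u t : ℝ) : EReal)) = 0) :
    ∀ᵐ t ∂μ, yb t = 0 := by
  have hnonpos := ae_nonpos_of_eintegral_mul_eq_zero μ Y hH hyb hzero
  have hneg_nonpos := ae_nonpos_of_eintegral_mul_eq_zero μ Y hH hyb.neg fun u hu => by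
    simpa only [Pi.neg_apply, EReal.neg_mul] using eintegral_neg_eq_zero (hzero u hu)
  filter_upwards [hnonpos, hneg_nonpos] with t hle hneg_le
  exact le_antisymm hle (by simpa using hneg_le)

/-- If `μ` is σ-finite and the linear space `Y` of measurable functions satisfies condition (H)
(for every `A` of finite positive measure there is a measurable `u > 0` a.e. with `u·χ_A ∈ Y`),
then any measurable extended-real `ȳ` with `∫ ȳ·u dμ = 0` for all `u ∈ Y` vanishes a.e. -/
theorem stmt_17 {T : Type*} [MeasurableSpace T] (μ : Measure T) [SigmaFinite μ]
    (Y : Subspace ℝ (T → ℝ)) (hYmeas : ∀ u ∈ Y, Measurable u)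
    (hH : ∀ A : Set T, MeasurableSet A → 0 < μ A → μ A < ⊤ →
      ∃ u : T → ℝ, Measurable u ∧ (∀ᵐ t ∂μ, 0 < u t) ∧ A.indicator u ∈ Y)
    (yb : T → EReal) (hyb : Measurable yb)
    (hzero : ∀ u ∈ Y, eintegral μ (fun t => yb t * ((u t : ℝ) : EReal)) = 0) :
    ∀ᵐ t ∂μ, yb t = 0 :=
  stmt_17_general μ Y hH yb hyb hzero
end
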